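/- Under the hypotheses of the score-matching equivalence theorem (strictly positive differentiable conditional densities q_t(·|x_0) on ℝ^n with differentiable marginal q_t and valid differentiation under the integral sign, and finiteness of all relevant expectations), any measurable s* : ℝ^n → ℝ^n minimizing J_2(s) = (1/2) E_{(x_0,x) ~ q_0(x_0) q_t(x|x_0)}[ ‖s(x) − ∇_x log q_t(x|x_0)‖² ] over all such functions also minimizes J_1(s) = (1/2) E_{x ~ q_t}[ ‖s(x) − ∇_x log q_t(x)‖² ]; in particular s*(x) = ∇_x log q_t(x) for q_t-almost every x. -/

import Mathlib

/-!
Expanding the squares, `J₂(s) - J₁(s)` does not depend on `s`. The terms `‖s‖²` agree because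
`q_t` is the `x`-marginal of the joint density `q₀(x₀) q_t(x|x₀)`. The cross terms agree because
`q₀ q_t(x|x₀) ∇ log q_t(x|x₀) = q₀ ∇q_t(x|x₀)`, which integrates over `x₀` to
`∇q_t(x) = q_t(x) ∇ log q_t(x)`. Hence a minimizer `s*` of `J₂` has
`J₁(s*) ≤ J₁(∇ log q_t) = 0`, and a vanishing weighted `L²` distance forces `s* = ∇ log q_t`
almost everywhere.
-/

open MeasureTheory Real
open scoped RealInnerProductSpace

section Gradient

variable {E : Type*} [NormedAddCommGroup E] [InnerProductSpace ℝ E]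

noncomputable def score [CompleteSpace E] (f : E → ℝ) (x : E) : E :=
  gradient (fun y => log (f y)) x

theorem score_eq_inv_smul_gradient [CompleteSpace E] {f : E → ℝ} {x : E}
    (hf : DifferentiableAt ℝ f x) (hx : f x ≠ 0) :
    score f x = (f x)⁻¹ • gradient f x := by
  rw [score, gradient, gradient, (hf.hasFDerivAt.log hx).fderiv, map_smulₛₗ]
  simp

theorem inner_gradient_eq_fderiv [CompleteSpace E] (f : E → ℝ) (x v : E) :
    ⟪gradient f x, v⟫ = fderiv ℝ f x v :=
  InnerProductSpace.toDual_symm_apply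

variable [MeasurableSpace E] [BorelSpace E]

theorem measurable_fderiv_apply_of_measurable_uncurry {α : Type*} [MeasurableSpace α]
    {f : α → E → ℝ} (hf : Measurable (Function.uncurry f))
    (hdiff : ∀ a, Differentiable ℝ (f a)) (v : E) :
    Measurable fun p : α × E => fderiv ℝ (f p.1) p.2 v := by
  have hquot : ∀ m : ℕ, Measurable fun p : α × E =>
      ((m : ℝ) + 1) • (f p.1 (p.2 + ((m : ℝ) + 1)⁻¹ • v) - f p.1 p.2) := by
    intro m
    have hshift : Measurable fun p : α × E => f p.1 (p.2 + ((m : ℝ) + 1)⁻¹ • v) :=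
      hf.comp (measurable_fst.prodMk (measurable_snd.add_const _))
    exact (hshift.sub hf).const_smul ((m : ℝ) + 1)
  refine measurable_of_tendsto_metrizable hquot (tendsto_pi_nhds.2 fun p => ?_)
  refine ((hdiff p.1) p.2).hasFDerivAt.lim v ?_
  have hlin : Filter.Tendsto (fun m : ℕ => (m : ℝ) + 1) Filter.atTop Filter.atTop :=
    Filter.tendsto_atTop_add_const_right _ 1 tendsto_natCast_atTop_atTop
  exact tendsto_norm_atTop_atTop.comp hlin

theorem measurable_gradient_of_measurable_uncurry [FiniteDimensional ℝ E]
    {α : Type*} [MeasurableSpace α]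
    {f : α → E → ℝ} (hf : Measurable (Function.uncurry f))
    (hdiff : ∀ a, Differentiable ℝ (f a)) :
    Measurable fun p : α × E => gradient (f p.1) p.2 := by
  let b := stdOrthonormalBasis ℝ E
  have hsum : ∀ p : α × E, gradient (f p.1) p.2 = ∑ i, fderiv ℝ (f p.1) p.2 (b i) • b i := by
    intro p
    conv_lhs => rw [← b.sum_repr' (gradient (f p.1) p.2)]
    exact Finset.sum_congr rfl fun i _ => by rw [real_inner_comm, inner_gradient_eq_fderiv]
  simp_rw [hsum]
  exact Finset.measurable_sum _ fun i _ =>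
    (measurable_fderiv_apply_of_measurable_uncurry hf hdiff (b i)).smul_const _

theorem measurable_score [CompleteSpace E] [SecondCountableTopology E] (f : E → ℝ) :
    Measurable (score f) :=
  (InnerProductSpace.toDual ℝ E).symm.continuous.measurable.comp (measurable_fderiv ℝ _)

end Gradient

section WeightedSquares

variable {α E : Type*} [MeasurableSpace α] {μ : Measure α} [NormedAddCommGroup E] {w : α → ℝ}

theorem ae_eq_of_integral_mul_norm_sub_sq_eq_zero (hw : ∀ a, 0 < w a) {u v : α → E}
    (hint : Integrable (fun a => w a * ‖u a - v a‖ ^ 2) μ)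
    (hzero : ∫ a, w a * ‖u a - v a‖ ^ 2 ∂μ = 0) :
    u =ᵐ[μ] v := by
  have hnonneg : ∀ a, 0 ≤ w a * ‖u a - v a‖ ^ 2 := fun a => mul_nonneg (hw a).le (sq_nonneg _)
  filter_upwards [(integral_eq_zero_iff_of_nonneg hnonneg hint).mp hzero] with a ha
  simpa [(hw a).ne', sub_eq_zero] using ha

variable [InnerProductSpace ℝ E]

theorem integrable_mul_mul_of_integrable_mul_sq (hw : ∀ a, 0 ≤ w a)
    (hw_meas : AEStronglyMeasurable w μ) {f g : α → ℝ} (hf_meas : AEStronglyMeasurable f μ)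
    (hg_meas : AEStronglyMeasurable g μ)
    (hf : Integrable (fun a => w a * f a ^ 2) μ) (hg : Integrable (fun a => w a * g a ^ 2) μ) :
    Integrable (fun a => w a * (f a * g a)) μ := by
  refine ((hf.add hg).div_const 2).mono (hw_meas.mul (hf_meas.mul hg_meas))
    (Filter.Eventually.of_forall fun a => ?_)
  have hamgm : |f a * g a| ≤ (f a ^ 2 + g a ^ 2) / 2 := by
    rw [abs_mul]
    nlinarith [sq_nonneg (|f a| - |g a|), sq_abs (f a), sq_abs (g a)]
  have hbound : 0 ≤ (w a * f a ^ 2 + w a * g a ^ 2) / 2 := by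
    have := hw a
    positivity
  rw [Real.norm_eq_abs, Real.norm_eq_abs, Pi.add_apply, abs_of_nonneg hbound, abs_mul,
    abs_of_nonneg (hw a)]
  calc w a * |f a * g a| ≤ w a * ((f a ^ 2 + g a ^ 2) / 2) :=
        mul_le_mul_of_nonneg_left hamgm (hw a)
    _ = (w a * f a ^ 2 + w a * g a ^ 2) / 2 := by ring

theorem integrable_mul_inner_of_integrable_mul_norm_sq (hw : ∀ a, 0 ≤ w a)
    (hw_meas : AEStronglyMeasurable w μ) {u v : α → E} (hu_meas : AEStronglyMeasurable u μ)
    (hv_meas : AEStronglyMeasurable v μ)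
    (hu : Integrable (fun a => w a * ‖u a‖ ^ 2) μ) (hv : Integrable (fun a => w a * ‖v a‖ ^ 2) μ) :
    Integrable (fun a => w a * ⟪u a, v a⟫) μ := by
  refine (integrable_mul_mul_of_integrable_mul_sq hw hw_meas hu_meas.norm hv_meas.norm hu hv).mono
    (hw_meas.mul (hu_meas.inner hv_meas)) (Filter.Eventually.of_forall fun a => ?_)
  rw [Real.norm_eq_abs, Real.norm_eq_abs, abs_mul, abs_mul, abs_of_nonneg (hw a),
    abs_of_nonneg (by positivity : 0 ≤ ‖u a‖ * ‖v a‖)]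
  exact mul_le_mul_of_nonneg_left (abs_real_inner_le_norm _ _) (hw a)

theorem integrable_mul_norm_sub_sq (hw : ∀ a, 0 ≤ w a)
    (hw_meas : AEStronglyMeasurable w μ) {u v : α → E} (hu_meas : AEStronglyMeasurable u μ)
    (hv_meas : AEStronglyMeasurable v μ)
    (hu : Integrable (fun a => w a * ‖u a‖ ^ 2) μ) (hv : Integrable (fun a => w a * ‖v a‖ ^ 2) μ) :
    Integrable (fun a => w a * ‖u a - v a‖ ^ 2) μ := by
  have hcross := integrable_mul_inner_of_integrable_mul_norm_sq hw hw_meas hu_meas hv_meas hu hv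
  refine ((hu.sub (hcross.const_mul 2)).add hv).congr (Filter.Eventually.of_forall fun a => ?_)
  simp only [Pi.add_apply, Pi.sub_apply, norm_sub_sq_real]
  ring

theorem integral_mul_norm_sub_sq {u v : α → E}
    (hu : Integrable (fun a => w a * ‖u a‖ ^ 2) μ) (huv : Integrable (fun a => w a * ⟪u a, v a⟫) μ)
    (hv : Integrable (fun a => w a * ‖v a‖ ^ 2) μ) :
    ∫ a, w a * ‖u a - v a‖ ^ 2 ∂μ
      = ∫ a, w a * ‖u a‖ ^ 2 ∂μ - 2 * ∫ a, w a * ⟪u a, v a⟫ ∂μ + ∫ a, w a * ‖v a‖ ^ 2 ∂μ := by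
  have hexpand : ∀ a, w a * ‖u a - v a‖ ^ 2
      = w a * ‖u a‖ ^ 2 - 2 * (w a * ⟪u a, v a⟫) + w a * ‖v a‖ ^ 2 := fun a => by
    rw [norm_sub_sq_real]; ring
  simp only [hexpand]
  have hfirst : Integrable (fun a => w a * ‖u a‖ ^ 2 - 2 * (w a * ⟪u a, v a⟫)) μ :=
    hu.sub (huv.const_mul 2)
  rw [integral_add hfirst hv, integral_sub hu (huv.const_mul 2), integral_const_mul]

end WeightedSquares

section JointDensity

variable {α β : Type*} [MeasurableSpace α] [MeasurableSpace β] {μ : Measure α} {ν : Measure β}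
  [SFinite μ] [SFinite ν] {ρ : α × β → ℝ} {m : β → ℝ}

theorem integrable_prod_mul_snd (hρ : ∀ p, 0 ≤ ρ p) (hρ_meas : AEStronglyMeasurable ρ (μ.prod ν))
    (hslice : ∀ᵐ y ∂ν, Integrable (fun a => ρ (a, y)) μ)
    (hm : ∀ᵐ y ∂ν, ∫ a, ρ (a, y) ∂μ = m y) {h : β → ℝ} (hh : AEStronglyMeasurable h ν)
    (hmh : Integrable (fun y => m y * h y) ν) :
    Integrable (fun p => ρ p * h p.2) (μ.prod ν) := by
  have hmeas : AEStronglyMeasurable (fun p => ρ p * h p.2) (μ.prod ν) := hρ_meas.mul hh.comp_snd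
  rw [integrable_prod_iff' hmeas]
  refine ⟨hslice.mono fun y hy => hy.mul_const (h y), hmh.norm.congr ?_⟩
  filter_upwards [hm] with y hy
  have hm_nonneg : 0 ≤ m y := hy ▸ integral_nonneg fun a => hρ (a, y)
  simp only [norm_mul, Real.norm_of_nonneg (hρ _), integral_mul_const, hy,
    Real.norm_of_nonneg hm_nonneg]

theorem integral_prod_mul_snd (hm : ∀ᵐ y ∂ν, ∫ a, ρ (a, y) ∂μ = m y) {h : β → ℝ}
    (hint : Integrable (fun p => ρ p * h p.2) (μ.prod ν)) :
    ∫ p, ρ p * h p.2 ∂(μ.prod ν) = ∫ y, m y * h y ∂ν := by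
  rw [integral_prod_symm _ hint]
  refine integral_congr_ae (hm.mono fun y hy => ?_)
  simp only [integral_mul_const, hy]

theorem integral_prod_inner_snd {E : Type*} [NormedAddCommGroup E] [InnerProductSpace ℝ E]
    [CompleteSpace E] {F : α × β → E} {s : β → E}
    (hint : Integrable (fun p => ⟪s p.2, F p⟫) (μ.prod ν))
    (hF : ∀ᵐ y ∂ν, Integrable (fun a => F (a, y)) μ) :
    ∫ p, ⟪s p.2, F p⟫ ∂(μ.prod ν) = ∫ y, ⟪s y, ∫ a, F (a, y) ∂μ⟫ ∂ν := by
  rw [integral_prod_symm _ hint]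
  exact integral_congr_ae (hF.mono fun y hy => integral_inner hy (s y))

end JointDensity

section ScoreMatching

variable {α E : Type*} [MeasurableSpace α] {μ : Measure α}
  [NormedAddCommGroup E] [InnerProductSpace ℝ E] [FiniteDimensional ℝ E]
  [MeasurableSpace E] {ν : Measure E}

-- `J₁` of the paper
noncomputable def explicitScoreLoss (ν : Measure E) (qt : E → ℝ) (s : E → E) : ℝ :=
  (1 / 2) * ∫ x, qt x * ‖s x - score qt x‖ ^ 2 ∂ν

-- `J₂` of the paper
noncomputable def denoisingScoreLoss (μ : Measure α) (ν : Measure E) (q0 : α → ℝ)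
    (qc : α → E → ℝ) (s : E → E) : ℝ :=
  (1 / 2) * ∫ p, q0 p.1 * qc p.1 p.2 * ‖s p.2 - score (qc p.1) p.2‖ ^ 2 ∂(μ.prod ν)

structure IsNoisingModel (μ : Measure α) (q0 : α → ℝ) (qc : α → E → ℝ) (qt : E → ℝ) : Prop where
  q0_nonneg : ∀ x0, 0 ≤ q0 x0
  measurable_q0 : Measurable q0
  qc_pos : ∀ x0 x, 0 < qc x0 x
  differentiable_qc : ∀ x0, Differentiable ℝ (qc x0)
  measurable_qc : Measurable (Function.uncurry qc)
  qt_eq_integral : ∀ x, qt x = ∫ x0, q0 x0 * qc x0 x ∂μ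
  qt_pos : ∀ x, 0 < qt x
  differentiable_qt : Differentiable ℝ qt
  gradient_qt_eq_integral : ∀ x, gradient qt x = ∫ x0, q0 x0 • gradient (qc x0) x ∂μ

namespace IsNoisingModel

variable {q0 : α → ℝ} {qc : α → E → ℝ} {qt : E → ℝ} (h : IsNoisingModel μ q0 qc qt)
include h

theorem joint_nonneg (p : α × E) : 0 ≤ q0 p.1 * qc p.1 p.2 :=
  mul_nonneg (h.q0_nonneg p.1) (h.qc_pos p.1 p.2).le

theorem integrable_joint_slice (x : E) : Integrable (fun x0 => q0 x0 * qc x0 x) μ :=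
  Integrable.of_integral_ne_zero (h.qt_eq_integral x ▸ (h.qt_pos x).ne')

theorem joint_smul_score_qc (x0 : α) (x : E) :
    (q0 x0 * qc x0 x) • score (qc x0) x = q0 x0 • gradient (qc x0) x := by
  rw [score_eq_inv_smul_gradient (h.differentiable_qc x0 x) (h.qc_pos x0 x).ne', smul_smul,
    mul_assoc, mul_inv_cancel₀ (h.qc_pos x0 x).ne', mul_one]

theorem qt_smul_score (x : E) :
    qt x • score qt x = gradient qt x := by
  rw [score_eq_inv_smul_gradient (h.differentiable_qt x) (h.qt_pos x).ne', smul_smul,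
    mul_inv_cancel₀ (h.qt_pos x).ne', one_smul]

theorem measurable_joint : Measurable fun p : α × E => q0 p.1 * qc p.1 p.2 :=
  (h.measurable_q0.comp measurable_fst).mul h.measurable_qc

theorem measurable_gradient_qc [BorelSpace E] : Measurable fun p : α × E => gradient (qc p.1) p.2 :=
  measurable_gradient_of_measurable_uncurry h.measurable_qc h.differentiable_qc

theorem measurable_score_qc [BorelSpace E] :
    Measurable fun p : α × E => score (qc p.1) p.2 :=
  measurable_gradient_of_measurable_uncurry (f := fun x0 y => log (qc x0 y))
    (measurable_log.comp h.measurable_qc)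
    fun x0 => (h.differentiable_qc x0).log fun x => (h.qc_pos x0 x).ne'

variable [SFinite μ] [SFinite ν]

theorem integrable_joint_mul_snd {f : E → ℝ} (hf : AEStronglyMeasurable f ν)
    (hqt_f : Integrable (fun x => qt x * f x) ν) :
    Integrable (fun p : α × E => q0 p.1 * qc p.1 p.2 * f p.2) (μ.prod ν) :=
  integrable_prod_mul_snd h.joint_nonneg h.measurable_joint.aestronglyMeasurable
    (.of_forall h.integrable_joint_slice) (.of_forall fun x => (h.qt_eq_integral x).symm) hf hqt_f

theorem integral_joint_mul_snd {f : E → ℝ}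
    (hint : Integrable (fun p : α × E => q0 p.1 * qc p.1 p.2 * f p.2) (μ.prod ν)) :
    ∫ p, q0 p.1 * qc p.1 p.2 * f p.2 ∂(μ.prod ν) = ∫ x, qt x * f x ∂ν :=
  integral_prod_mul_snd (.of_forall fun x => (h.qt_eq_integral x).symm) hint

variable [BorelSpace E]

theorem ae_integrable_q0_smul_gradient_qc
    (hscore_c : Integrable (fun p : α × E =>
      q0 p.1 * qc p.1 p.2 * ‖score (qc p.1) p.2‖ ^ 2) (μ.prod ν)) :
    ∀ᵐ x ∂ν, Integrable (fun x0 => q0 x0 • gradient (qc x0) x) μ := by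
  filter_upwards [hscore_c.prod_left_ae] with x hx
  -- `‖q₀ ∇q_t(x|·)‖ = ρ ‖score‖ ≤ (ρ + ρ ‖score‖²) / 2` with `ρ = q₀ q_t(x|·)`
  have hnorm : Integrable (fun x0 => q0 x0 * qc x0 x * (1 * ‖score (qc x0) x‖)) μ :=
    integrable_mul_mul_of_integrable_mul_sq (fun x0 => h.joint_nonneg (x0, x))
      (h.measurable_joint.comp measurable_prodMk_right).aestronglyMeasurable
      aestronglyMeasurable_const
      (h.measurable_score_qc.comp measurable_prodMk_right).norm.aestronglyMeasurable
      (by simpa using h.integrable_joint_slice x) hx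
  refine hnorm.mono' ((h.measurable_q0.smul (h.measurable_gradient_qc.comp
    measurable_prodMk_right)).aestronglyMeasurable) (.of_forall fun x0 => le_of_eq ?_)
  rw [← h.joint_smul_score_qc, norm_smul, one_mul, Real.norm_of_nonneg (h.joint_nonneg (x0, x))]

theorem integrable_joint_mul_inner_score_qc
    (hscore_c : Integrable (fun p : α × E =>
      q0 p.1 * qc p.1 p.2 * ‖score (qc p.1) p.2‖ ^ 2) (μ.prod ν))
    {s : E → E} (hs : Measurable s) (hs2 : Integrable (fun x => qt x * ‖s x‖ ^ 2) ν) :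
    Integrable (fun p : α × E => q0 p.1 * qc p.1 p.2 * ⟪s p.2, score (qc p.1) p.2⟫) (μ.prod ν) :=
  integrable_mul_inner_of_integrable_mul_norm_sq (u := fun p : α × E => s p.2)
    h.joint_nonneg h.measurable_joint.aestronglyMeasurable
    (hs.comp measurable_snd).aestronglyMeasurable h.measurable_score_qc.aestronglyMeasurable
    (h.integrable_joint_mul_snd (hs.norm.pow_const 2).aestronglyMeasurable hs2) hscore_c

theorem integral_joint_inner_score_qc
    (hscore_c : Integrable (fun p : α × E =>
      q0 p.1 * qc p.1 p.2 * ‖score (qc p.1) p.2‖ ^ 2) (μ.prod ν))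
    {s : E → E} (hs : Measurable s) (hs2 : Integrable (fun x => qt x * ‖s x‖ ^ 2) ν) :
    ∫ p, q0 p.1 * qc p.1 p.2 * ⟪s p.2, score (qc p.1) p.2⟫ ∂(μ.prod ν)
      = ∫ x, qt x * ⟪s x, score qt x⟫ ∂ν := by
  have hjoint_inner : ∀ p : α × E,
      q0 p.1 * qc p.1 p.2 * ⟪s p.2, score (qc p.1) p.2⟫
        = ⟪s p.2, q0 p.1 • gradient (qc p.1) p.2⟫ := fun p => by
    rw [← h.joint_smul_score_qc, real_inner_smul_right]
  have hint : Integrable (fun p : α × E => ⟪s p.2, q0 p.1 • gradient (qc p.1) p.2⟫) (μ.prod ν) :=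
    (h.integrable_joint_mul_inner_score_qc hscore_c hs hs2).congr (.of_forall hjoint_inner)
  simp only [hjoint_inner]
  rw [integral_prod_inner_snd hint (h.ae_integrable_q0_smul_gradient_qc hscore_c)]
  simp only [← h.gradient_qt_eq_integral, ← h.qt_smul_score, real_inner_smul_right]

theorem denoisingScoreLoss_eq_explicitScoreLoss_add
    (hscore_t : Integrable (fun x => qt x * ‖score qt x‖ ^ 2) ν)
    (hscore_c : Integrable (fun p : α × E =>
      q0 p.1 * qc p.1 p.2 * ‖score (qc p.1) p.2‖ ^ 2) (μ.prod ν))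
    {s : E → E} (hs : Measurable s) (hs2 : Integrable (fun x => qt x * ‖s x‖ ^ 2) ν) :
    denoisingScoreLoss μ ν q0 qc s
      = explicitScoreLoss ν qt s + (denoisingScoreLoss μ ν q0 qc 0 - explicitScoreLoss ν qt 0) := by
  have hs2_joint := h.integrable_joint_mul_snd (hs.norm.pow_const 2).aestronglyMeasurable hs2
  have hcross := integrable_mul_inner_of_integrable_mul_norm_sq (fun x => (h.qt_pos x).le)
    h.differentiable_qt.continuous.aestronglyMeasurable hs.aestronglyMeasurable
    (measurable_score qt).aestronglyMeasurable hs2 hscore_t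
  simp only [denoisingScoreLoss, explicitScoreLoss, Pi.zero_apply, zero_sub, norm_neg]
  rw [integral_mul_norm_sub_sq hs2_joint (h.integrable_joint_mul_inner_score_qc hscore_c hs hs2)
      hscore_c, integral_mul_norm_sub_sq hs2 hcross hscore_t,
    h.integral_joint_mul_snd (f := fun x => ‖s x‖ ^ 2) hs2_joint,
    h.integral_joint_inner_score_qc hscore_c hs hs2]
  ring

end IsNoisingModel

end ScoreMatching

theorem minimizer_J2_minimizes_J1_general {n : ℕ}
    (q0 : EuclideanSpace ℝ (Fin n) → ℝ)
    (qc : EuclideanSpace ℝ (Fin n) → EuclideanSpace ℝ (Fin n) → ℝ)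
    (qt : EuclideanSpace ℝ (Fin n) → ℝ)
    -- q0 is a probability density
    (hq0_nonneg : ∀ x0, 0 ≤ q0 x0)
    (hq0_meas : Measurable q0)
    -- strictly positive differentiable conditional probability densities
    (hqc_pos : ∀ x0 x, 0 < qc x0 x)
    (hqc_diff : ∀ x0, Differentiable ℝ (qc x0))
    (hqc_meas : Measurable (Function.uncurry qc))
    -- qt is the marginal density, strictly positive and differentiable
    (hqt_def : ∀ x, qt x = ∫ x0, q0 x0 * qc x0 x)
    (hqt_pos : ∀ x, 0 < qt x)
    (hqt_diff : Differentiable ℝ qt)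
    -- differentiation under the integral sign is valid
    (hswap : ∀ x, gradient qt x = ∫ x0, q0 x0 • gradient (fun y => qc x0 y) x)
    -- finiteness of all relevant (s-independent) expectations
    (hscore_t : Integrable (fun x => qt x * ‖gradient (fun y => Real.log (qt y)) x‖ ^ 2))
    (hscore_c : Integrable (fun p : EuclideanSpace ℝ (Fin n) × EuclideanSpace ℝ (Fin n) =>
      q0 p.1 * qc p.1 p.2 * ‖gradient (fun y => Real.log (qc p.1 y)) p.2‖ ^ 2))
    -- sstar is admissible and minimizes J₂ over all admissible score models
    (sstar : EuclideanSpace ℝ (Fin n) → EuclideanSpace ℝ (Fin n))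
    (hstar_meas : Measurable sstar)
    (hstar_mom : Integrable (fun x => qt x * ‖sstar x‖ ^ 2))
    (hmin : ∀ s : EuclideanSpace ℝ (Fin n) → EuclideanSpace ℝ (Fin n),
      Measurable s → Integrable (fun x => qt x * ‖s x‖ ^ 2) →
      (1 / 2) * (∫ p : EuclideanSpace ℝ (Fin n) × EuclideanSpace ℝ (Fin n),
          q0 p.1 * qc p.1 p.2 * ‖sstar p.2 - gradient (fun y => Real.log (qc p.1 y)) p.2‖ ^ 2)
        ≤ (1 / 2) * ∫ p : EuclideanSpace ℝ (Fin n) × EuclideanSpace ℝ (Fin n),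
            q0 p.1 * qc p.1 p.2 * ‖s p.2 - gradient (fun y => Real.log (qc p.1 y)) p.2‖ ^ 2) :
    -- sstar also minimizes J₁ over all admissible score models, and equals the score q_t-a.e.
    (∀ s : EuclideanSpace ℝ (Fin n) → EuclideanSpace ℝ (Fin n),
      Measurable s → Integrable (fun x => qt x * ‖s x‖ ^ 2) →
      (1 / 2) * (∫ x, qt x * ‖sstar x - gradient (fun y => Real.log (qt y)) x‖ ^ 2)
        ≤ (1 / 2) * ∫ x, qt x * ‖s x - gradient (fun y => Real.log (qt y)) x‖ ^ 2) ∧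
    (∀ᵐ x ∂(volume.withDensity fun x => ENNReal.ofReal (qt x)),
      sstar x = gradient (fun y => Real.log (qt y)) x) := by
  have hmodel : IsNoisingModel volume q0 qc qt :=
    ⟨hq0_nonneg, hq0_meas, hqc_pos, hqc_diff, hqc_meas, hqt_def, hqt_pos, hqt_diff, hswap⟩
  have hJ1_nonneg (s) : 0 ≤ explicitScoreLoss volume qt s :=
    mul_nonneg (by norm_num) (integral_nonneg fun x => mul_nonneg (hqt_pos x).le (sq_nonneg _))
  have hJ1_star : explicitScoreLoss volume qt sstar = 0 := by
    have hJ2_le : denoisingScoreLoss volume volume q0 qc sstar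
        ≤ denoisingScoreLoss volume volume q0 qc (score qt) :=
      hmin (score qt) (measurable_score qt) hscore_t
    rw [hmodel.denoisingScoreLoss_eq_explicitScoreLoss_add hscore_t hscore_c hstar_meas hstar_mom,
      hmodel.denoisingScoreLoss_eq_explicitScoreLoss_add hscore_t hscore_c (measurable_score qt)
        hscore_t] at hJ2_le
    have hJ1_score : explicitScoreLoss volume qt (score qt) = 0 := by simp [explicitScoreLoss]
    linarith [hJ1_nonneg sstar]
  refine ⟨fun s _ _ => (hJ1_star ▸ hJ1_nonneg s : explicitScoreLoss volume qt sstar ≤ _), ?_⟩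
  refine (withDensity_absolutelyContinuous _ _).ae_le
    (ae_eq_of_integral_mul_norm_sub_sq_eq_zero (v := score qt) hqt_pos ?_
      (by simpa [explicitScoreLoss] using hJ1_star))
  exact integrable_mul_norm_sub_sq (fun x => (hqt_pos x).le)
    hqt_diff.continuous.aestronglyMeasurable hstar_meas.aestronglyMeasurable
    (measurable_score qt).aestronglyMeasurable hstar_mom hscore_t

/-- **A minimizer of the denoising objective J₂ also minimizes the explicit objective J₁**,
and a.e. (w.r.t. the marginal `q_t`) equals the marginal score `∇ log q_t`.
Admissible score models are measurable vector fields with finite second moment under `q_t`. -/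
theorem minimizer_J2_minimizes_J1 {n : ℕ}
    (q0 : EuclideanSpace ℝ (Fin n) → ℝ)
    (qc : EuclideanSpace ℝ (Fin n) → EuclideanSpace ℝ (Fin n) → ℝ)
    (qt : EuclideanSpace ℝ (Fin n) → ℝ)
    -- q0 is a probability density
    (hq0_nonneg : ∀ x0, 0 ≤ q0 x0)
    (hq0_meas : Measurable q0)
    (hq0_prob : ∫ x0, q0 x0 = 1)
    -- strictly positive differentiable conditional probability densities
    (hqc_pos : ∀ x0 x, 0 < qc x0 x)
    (hqc_diff : ∀ x0, Differentiable ℝ (qc x0))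
    (hqc_meas : Measurable (Function.uncurry qc))
    (hqc_prob : ∀ x0, ∫ x, qc x0 x = 1)
    -- qt is the marginal density, strictly positive and differentiable
    (hqt_def : ∀ x, qt x = ∫ x0, q0 x0 * qc x0 x)
    (hqt_pos : ∀ x, 0 < qt x)
    (hqt_diff : Differentiable ℝ qt)
    -- differentiation under the integral sign is valid
    (hswap : ∀ x, gradient qt x = ∫ x0, q0 x0 • gradient (fun y => qc x0 y) x)
    -- finiteness of all relevant (s-independent) expectations
    (hscore_t : Integrable (fun x => qt x * ‖gradient (fun y => Real.log (qt y)) x‖ ^ 2))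
    (hscore_c : Integrable (fun p : EuclideanSpace ℝ (Fin n) × EuclideanSpace ℝ (Fin n) =>
      q0 p.1 * qc p.1 p.2 * ‖gradient (fun y => Real.log (qc p.1 y)) p.2‖ ^ 2))
    -- sstar is admissible and minimizes J₂ over all admissible score models
    (sstar : EuclideanSpace ℝ (Fin n) → EuclideanSpace ℝ (Fin n))
    (hstar_meas : Measurable sstar)
    (hstar_mom : Integrable (fun x => qt x * ‖sstar x‖ ^ 2))
    (hmin : ∀ s : EuclideanSpace ℝ (Fin n) → EuclideanSpace ℝ (Fin n),
      Measurable s → Integrable (fun x => qt x * ‖s x‖ ^ 2) →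
      (1 / 2) * (∫ p : EuclideanSpace ℝ (Fin n) × EuclideanSpace ℝ (Fin n),
          q0 p.1 * qc p.1 p.2 * ‖sstar p.2 - gradient (fun y => Real.log (qc p.1 y)) p.2‖ ^ 2)
        ≤ (1 / 2) * ∫ p : EuclideanSpace ℝ (Fin n) × EuclideanSpace ℝ (Fin n),
            q0 p.1 * qc p.1 p.2 * ‖s p.2 - gradient (fun y => Real.log (qc p.1 y)) p.2‖ ^ 2) :
    -- sstar also minimizes J₁ over all admissible score models, and equals the score q_t-a.e.
    (∀ s : EuclideanSpace ℝ (Fin n) → EuclideanSpace ℝ (Fin n),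
      Measurable s → Integrable (fun x => qt x * ‖s x‖ ^ 2) →
      (1 / 2) * (∫ x, qt x * ‖sstar x - gradient (fun y => Real.log (qt y)) x‖ ^ 2)
        ≤ (1 / 2) * ∫ x, qt x * ‖s x - gradient (fun y => Real.log (qt y)) x‖ ^ 2) ∧
    (∀ᵐ x ∂(volume.withDensity fun x => ENNReal.ofReal (qt x)),
      sstar x = gradient (fun y => Real.log (qt y)) x) :=
  minimizer_J2_minimizes_J1_general q0 qc qt hq0_nonneg hq0_meas hqc_pos hqc_diff hqc_meas hqt_def
    hqt_pos hqt_diff hswap hscore_t hscore_c sstar hstar_meas hstar_mom hmin
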